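/- Let p be an idempotent ultrafilter on ℤ, α_1,…,α_N ∈ ℝ, and f_1,…,f_N : ℤ → ℤ p-almost polynomials. Define g(n) := ∑_{i=1}^N α_i f_i(n) and let ⌊g⌉(n) := ⌊g(n) + 1/2⌋ be the closest-integer function. Then ⌊g⌉ is a p-almost polynomial of degree at most max_i deg^p f_i. If moreover |∑_{i=1}^N α_i C(f_i)| < 1/2, then ⌊g⌉ is admissible. -/

import Mathlib

open Filter

namespace AP

variable {X : Type*} [AddCommSemigroup X] {Y : Type*} [AddCommGroup Y]

/-- The relativised difference operator `Δ̄ₐ f (x) = f (x + a) - f x - f a`. -/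
def Dbar (a : X) (f : X → Y) : X → Y := fun x => f (x + a) - f x - f a

/-- The iterated difference `Δ̄^d f (m_0, …, m_d)`, where the first argument `w 0` is the
parameter of the outermost difference and the last argument is the evaluation point. -/
def DeltaFull : ∀ (d : ℕ), (X → Y) → (Fin (d + 1) → X) → Y
  | 0, f, w => f (w 0)
  | d + 1, f, w => DeltaFull d (Dbar (w 0) f) fun i => w i.succ

/-- The iterated `p`-limit of a function of `r` variables, taken in the discrete topology on the
target: the limit exists with value `c` iff, iteratively, the value is `c` `p`-almost
everywhere.  The outermost limit is taken over the first variable. -/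
def IterLim {Z : Type*} (p : Ultrafilter X) : ∀ (r : ℕ), ((Fin r → X) → Z) → Z → Prop
  | 0, g, c => g (fun i => i.elim0) = c
  | r + 1, g, c => ∀ᶠ a in (p : Filter X), IterLim p r (fun v => g (Fin.cons a v)) c

/-- `HasC p d f c` asserts that the constant
`C_d(f) = (-1)^d ⋅ p-lim_{m_0,…,m_d} Δ̄^d f (m_0,…,m_d)` exists and equals `c`. -/
def HasC (p : Ultrafilter X) (d : ℕ) (f : X → Y) (c : Y) : Prop :=
  IterLim p (d + 1) (DeltaFull d f) (((-1 : ℤ) ^ d) • c)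

/-- `f` is a `p`-almost polynomial of degree at most `d`: for `d = 0` this means `f` is constant
`p`-a.e. (degree `-∞` corresponding to the constant `0`), and for `d + 1` it means that
`Δ̄ₐ f` has degree at most `d` for `p`-almost all `a`. -/
def APdegLE (p : Ultrafilter X) : ℕ → (X → Y) → Prop
  | 0, f => ∃ c, ∀ᶠ x in (p : Filter X), f x = c
  | d + 1, f => ∀ᶠ a in (p : Filter X), APdegLE p d (Dbar a f)

/-- Addition of ultrafilters: `A ∈ p + q` iff `∀ᶠ m in p, ∀ᶠ n in q, n + m ∈ A`, so that
`(p+q)-lim_n g n = p-lim_m q-lim_n g (n + m)`. -/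
def UFAdd (p q : Ultrafilter X) : Ultrafilter X := p.bind fun m => q.map fun n => n + m

/-- An ultrafilter is idempotent if `p + p = p`. -/
def IsIdem (p : Ultrafilter X) : Prop := UFAdd p p = p

end AP


namespace AP

set_option linter.unusedSectionVars false

section Aux
variable {X : Type*} [AddCommSemigroup X] {Y : Type*} [AddCommGroup Y]

variable {p : Ultrafilter X}

lemma idem_shift (hp : IsIdem p) {P : X → Prop} (h : ∀ᶠ x in (p:Filter X), P x) :
    ∀ᶠ a in (p:Filter X), ∀ᶠ x in (p:Filter X), P (x + a) := by
  have : {x | P x} ∈ UFAdd p p := by rw [hp]; exact h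
  exact this

lemma finrange_ae_const {Z : Type*} (h : X → Z) (hfin : (Set.range h).Finite) :
    ∃ c, ∀ᶠ x in (p:Filter X), h x = c := by
  obtain ⟨c, -, hc⟩ := Ultrafilter.eq_pure_of_finite_mem hfin (by
    exact Filter.mem_map.2 (by simp [Set.preimage, Set.mem_range_self]) : Set.range h ∈ p.map h)
  refine ⟨c, ?_⟩
  have : {c} ∈ p.map h := by rw [hc]; exact Filter.mem_pure.2 rfl
  exact this

lemma Dbar_sub (a : X) (f g : X → Y) :
    Dbar a (fun x => f x - g x) = fun x => Dbar a f x - Dbar a g x := by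
  funext x; simp only [Dbar]; abel

lemma Dbar_congr_ae (hp : IsIdem p) {f g : X → Y} (h : ∀ᶠ x in (p:Filter X), f x = g x) :
    ∀ᶠ a in (p:Filter X), ∀ᶠ x in (p:Filter X), Dbar a f x = Dbar a g x := by
  filter_upwards [idem_shift hp h, h] with a ha hfa
  filter_upwards [ha, h] with x hxa hx
  simp [Dbar, hxa, hx, hfa]

lemma iterLim_succ {Z : Type*} {r : ℕ} {g : (Fin (r+1) → X) → Z} {c : Z} :
    IterLim p (r+1) g c ↔ ∀ᶠ a in (p:Filter X), IterLim p r (fun v => g (Fin.cons a v)) c :=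
  Iff.rfl

/-- `DeltaFull (d+1) f (Fin.cons a w) = DeltaFull d (Dbar a f) w`. -/
lemma deltaFull_cons {d : ℕ} (f : X → Y) (a : X) :
    (fun w => DeltaFull (d+1) f (Fin.cons a w)) = DeltaFull d (Dbar a f) := by
  funext w
  show DeltaFull d (Dbar ((Fin.cons a w : Fin (d+2) → X) 0) f) _ = _
  simp [Fin.cons_zero]

lemma iterLim_deltaFull_succ_iff {d : ℕ} (f : X → Y) (v : Y) :
    IterLim p (d+1+1) (DeltaFull (d+1) f) v ↔
      ∀ᶠ a in (p:Filter X), IterLim p (d+1) (DeltaFull d (Dbar a f)) v := by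
  rw [iterLim_succ]
  exact eventually_congr (Eventually.of_forall fun a => by rw [deltaFull_cons])

/-- Iterated limits and full differences respect a.e. equality. -/
lemma iterLim_deltaFull_congr (hp : IsIdem p) :
    ∀ (d : ℕ) {f g : X → Y} (_ : ∀ᶠ x in (p:Filter X), f x = g x) {v : Y},
      IterLim p (d+1) (DeltaFull d f) v → IterLim p (d+1) (DeltaFull d g) v := by
  intro d
  induction d with
  | zero =>
    intro f g h v hf
    simp only [IterLim, DeltaFull] at hf ⊢
    filter_upwards [hf, h] with a ha hfa
    rw [Fin.cons_zero] at ha ⊢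
    rw [← hfa]; exact ha
  | succ d ih =>
    intro f g h v hf
    rw [iterLim_deltaFull_succ_iff] at hf ⊢
    filter_upwards [hf, Dbar_congr_ae hp h] with a ha hda
    exact ih hda ha

lemma hasC_congr (hp : IsIdem p) {d : ℕ} {f g : X → Y} {c : Y}
    (h : ∀ᶠ x in (p:Filter X), f x = g x) (hf : HasC p d f c) : HasC p d g c :=
  iterLim_deltaFull_congr hp d h hf

lemma apdegLE_congr (hp : IsIdem p) :
    ∀ (d : ℕ) {f g : X → Y} (_ : ∀ᶠ x in (p:Filter X), f x = g x),
      APdegLE p d f → APdegLE p d g := by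
  intro d
  induction d with
  | zero =>
    rintro f g h ⟨c, hc⟩
    exact ⟨c, by filter_upwards [hc, h] with x hx he; rw [← he]; exact hx⟩
  | succ d ih =>
    intro f g h hf
    simp only [APdegLE] at hf ⊢
    filter_upwards [hf, Dbar_congr_ae hp h] with a ha hda
    exact ih hda ha

lemma hasC_zero_iff {f : X → Y} {c : Y} :
    HasC p 0 f c ↔ ∀ᶠ m in (p:Filter X), f m = c := by
  have : ∀ a : X, (DeltaFull 0 f (Fin.cons a fun i => i.elim0) : Y) = f a := by
    intro a; show f _ = f a; rw [Fin.cons_zero]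
  unfold HasC
  rw [iterLim_succ]
  simp only [pow_zero, one_smul]
  exact eventually_congr (Eventually.of_forall fun a => by rw [show (IterLim p 0
    (fun v => DeltaFull 0 f (Fin.cons a v)) c) = (DeltaFull 0 f (Fin.cons a fun i => i.elim0) = c)
    from rfl, this a])

lemma hasC_succ_iff {d : ℕ} {f : X → Y} {c : Y} :
    HasC p (d+1) f c ↔ ∀ᶠ a in (p:Filter X), HasC p d (Dbar a f) (-c) := by
  unfold HasC
  rw [iterLim_deltaFull_succ_iff]
  have : ((-1 : ℤ) ^ (d+1)) • c = ((-1 : ℤ) ^ d) • (-c) := by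
    rw [pow_succ]
    rw [mul_smul]
    norm_num
  rw [this]

lemma apdegLE_dbar (hp : IsIdem p) :
    ∀ (d : ℕ) {f : X → Y}, APdegLE p d f → ∀ᶠ a in (p:Filter X), APdegLE p d (Dbar a f) := by
  intro d
  induction d with
  | zero =>
    rintro f ⟨c, hc⟩
    filter_upwards [idem_shift hp hc, hc] with a ha hfa
    refine ⟨-c, ?_⟩
    filter_upwards [ha, hc] with x hxa hx
    simp [Dbar, hxa, hx, hfa]
  | succ d ih =>
    intro f hf
    filter_upwards [hf] with a ha
    exact ih ha


lemma apdegLE_succ (hp : IsIdem p) {d : ℕ} {f : X → Y} (hf : APdegLE p d f) :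
    APdegLE p (d+1) f := apdegLE_dbar hp d hf

lemma apdegLE_mono (hp : IsIdem p) {d d' : ℕ} (h : d ≤ d') {f : X → Y}
    (hf : APdegLE p d f) : APdegLE p d' f := by
  induction d' with
  | zero => exact (Nat.le_zero.mp h) ▸ hf
  | succ d' ih =>
    rcases Nat.lt_or_ge d (d'+1) with hlt | hge
    · exact apdegLE_succ hp (ih (Nat.lt_succ_iff.mp hlt))
    · exact (Nat.le_antisymm h hge) ▸ hf

lemma apdegLE_sub (p : Ultrafilter X) :
    ∀ (d : ℕ) {f g : X → Y}, APdegLE p d f → APdegLE p d g →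
      APdegLE p d (fun x => f x - g x) := by
  intro d
  induction d with
  | zero =>
    rintro f g ⟨c, hc⟩ ⟨c', hc'⟩
    exact ⟨c - c', by filter_upwards [hc, hc'] with x hx hx'; rw [hx, hx']⟩
  | succ d ih =>
    intro f g hf hg
    filter_upwards [hf, hg] with a haf hag
    have : Dbar a (fun x => f x - g x) = fun x => Dbar a f x - Dbar a g x := Dbar_sub a f g
    rw [this]
    exact ih haf hag

lemma apdegLE_of_finrange (hp : IsIdem p) {d : ℕ} {h : X → Y}
    (hfin : (Set.range h).Finite) : APdegLE p d h := by
  obtain ⟨c, hc⟩ := finrange_ae_const (p := p) h hfin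
  exact apdegLE_mono hp (Nat.zero_le d) ⟨c, hc⟩

lemma hasC_stab (hp : IsIdem p) :
    ∀ (d : ℕ) {f : X → Y} {c : Y}, APdegLE p d f → HasC p d f c → HasC p (d+1) f c := by
  intro d
  induction d with
  | zero =>
    intro f c _ hC
    rw [hasC_zero_iff] at hC
    rw [hasC_succ_iff]
    filter_upwards [idem_shift hp hC, hC] with a ha hfa
    rw [hasC_zero_iff]
    filter_upwards [ha, hC] with x hxa hx
    simp [Dbar, hxa, hx, hfa]
  | succ d ih =>
    intro f c hdeg hC
    rw [hasC_succ_iff] at hC ⊢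
    filter_upwards [hC, hdeg] with a haC hadeg
    exact ih hadeg haC

lemma hasC_of_le (hp : IsIdem p) {d d' : ℕ} (h : d ≤ d') {f : X → Y} {c : Y}
    (hdeg : APdegLE p d f) (hC : HasC p d f c) : HasC p d' f c := by
  induction d' with
  | zero => exact (Nat.le_zero.mp h) ▸ hC
  | succ d' ih =>
    rcases Nat.lt_or_ge d (d'+1) with hlt | hge
    · have h' := Nat.lt_succ_iff.mp hlt
      exact hasC_stab hp d' (apdegLE_mono hp h' hdeg) (ih h')
    · exact (Nat.le_antisymm h hge) ▸ hC


section Int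
variable {p : Ultrafilter ℤ}

lemma dbar_sum_eq (N : ℕ) (α : Fin N → ℝ) (f : Fin N → ℤ → ℤ) (a : ℤ) :
    Dbar a (fun n => ∑ i, α i * (f i n : ℝ)) =
      fun n => ∑ i, α i * ((Dbar a (f i) n : ℤ) : ℝ) := by
  funext n
  simp only [Dbar, ← Finset.sum_sub_distrib]
  refine Finset.sum_congr rfl fun i _ => ?_
  push_cast
  ring

lemma round_abs_le (x : ℝ) : (|round x| : ℝ) ≤ |x| + 1/2 := by
  have h := abs_sub_round x
  have h2 : |(round x : ℝ)| = |x - (x - round x)| := by ring_nf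
  have h3 : |x - (x - round x)| ≤ |x| + |x - round x| := abs_sub x (x - round x)
  have : |(round x : ℝ)| = (|round x| : ℝ) := by push_cast; ring
  linarith [this ▸ (h2 ▸ h3)]

lemma partA (hp : IsIdem p) :
    ∀ (D : ℕ) {N : ℕ} (α : Fin N → ℝ) (f : Fin N → ℤ → ℤ),
      (∀ i, APdegLE p D (f i)) →
      APdegLE p D (fun n : ℤ => round (∑ i, α i * (f i n : ℝ))) := by
  intro D
  induction D with
  | zero =>
    intro N α f hf
    choose c hc using fun i => hf i
    refine ⟨round (∑ i, α i * (c i : ℝ)), ?_⟩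
    have : ∀ᶠ x in (p:Filter ℤ), ∀ i, f i x = c i := eventually_all.mpr hc
    filter_upwards [this] with x hx
    congr 1
    exact Finset.sum_congr rfl fun i _ => by rw [hx i]
  | succ D ih =>
    intro N α f hf
    show ∀ᶠ a in (p:Filter ℤ), APdegLE p D (Dbar a fun n : ℤ => round (∑ i, α i * (f i n : ℝ)))
    have hf' : ∀ᶠ a in (p:Filter ℤ), ∀ i, APdegLE p D (Dbar a (f i)) :=
      eventually_all.mpr fun i => hf i
    filter_upwards [hf'] with a ha
    set G : ℤ → ℝ := fun n => ∑ i, α i * (f i n : ℝ) with hG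
    set r : ℤ → ℤ := fun n => round (G n) with hr
    set S : ℤ → ℝ := fun n => ∑ i, α i * ((Dbar a (f i) n : ℤ) : ℝ) with hS
    have hDG : Dbar a G = S := dbar_sum_eq N α f a
    set E : ℤ → ℤ := fun n => round (S n) - Dbar a r n with hE
    have hEbnd : ∀ n, |E n| ≤ 2 := by
      intro n
      have key : S n = (G (n + a) - r (n + a)) - (G n - r n) - (G a - r a) + ((Dbar a r n : ℤ) : ℝ) := by
        have : S n = Dbar a G n := hDG ▸ rfl
        rw [this]
        simp only [Dbar]
        push_cast
        ring
      have hround : round (S n) = round ((G (n+a) - r (n+a)) - (G n - r n) - (G a - r a)) +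
          Dbar a r n := by rw [key, round_add_intCast]
      have hEn : E n = round ((G (n+a) - r (n+a)) - (G n - r n) - (G a - r a)) := by
        simp only [hE]; omega
      have h1 : |G (n+a) - r (n+a)| ≤ 1/2 := abs_sub_round _
      have h2 : |G n - r n| ≤ 1/2 := abs_sub_round _
      have h3 : |G a - r a| ≤ 1/2 := abs_sub_round _
      have habs : |(G (n+a) - r (n+a)) - (G n - r n) - (G a - r a)| ≤ 3/2 := by
        calc |(G (n+a) - r (n+a)) - (G n - r n) - (G a - r a)|
            ≤ |(G (n+a) - r (n+a)) - (G n - r n)| + |G a - r a| := abs_sub _ _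
          _ ≤ |G (n+a) - r (n+a)| + |G n - r n| + |G a - r a| := by
              have := abs_sub (G (n+a) - r (n+a)) (G n - r n)
              linarith
          _ ≤ 3/2 := by linarith
      have : (|E n| : ℝ) ≤ 2 := by
        rw [hEn]
        calc (|round ((G (n+a) - r (n+a)) - (G n - r n) - (G a - r a))| : ℝ)
            ≤ |(G (n+a) - r (n+a)) - (G n - r n) - (G a - r a)| + 1/2 := round_abs_le _
          _ ≤ 2 := by linarith
      exact_mod_cast this
    have hfin : (Set.range E).Finite :=
      (Set.finite_Icc (-2 : ℤ) 2).subset (by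
        rintro x ⟨n, rfl⟩
        exact Set.mem_Icc.mpr (abs_le.mp (hEbnd n)))
    have hrepr : Dbar a r = fun n => round (S n) - E n := by
      funext n; simp only [hE]; ring
    rw [show (Dbar a fun n : ℤ => round (∑ i, α i * (f i n : ℝ))) = Dbar a r from rfl, hrepr]
    exact apdegLE_sub p D (ih α (fun i => Dbar a (f i)) ha) (apdegLE_of_finrange hp hfin)

end Int

section Circle
variable {p : Ultrafilter ℤ}

instance : Fact ((0:ℝ) < 1) := ⟨one_pos⟩

/-- The circle `ℝ/ℤ`. -/
abbrev 𝕋 : Type := AddCircle (1 : ℝ)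

/-- The limit of `h` along the ultrafilter `p`, in the compact space `𝕋`. -/
noncomputable def TL (p : Ultrafilter ℤ) (h : ℤ → 𝕋) : 𝕋 :=
  (isCompact_univ.ultrafilter_le_nhds (p.map h)
    (le_principal_iff.mpr Filter.univ_mem)).choose

lemma TL_tendsto (h : ℤ → 𝕋) : Filter.Tendsto h (p : Filter ℤ) (nhds (TL p h)) := by
  have := (isCompact_univ.ultrafilter_le_nhds (p.map h)
    (le_principal_iff.mpr Filter.univ_mem)).choose_spec.2
  show Filter.map h (p : Filter ℤ) ≤ _
  rw [← Ultrafilter.coe_map]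
  exact this

lemma TL_eq {h : ℤ → 𝕋} {x : 𝕋} (hx : Filter.Tendsto h (p : Filter ℤ) (nhds x)) :
    TL p h = x :=
  tendsto_nhds_unique (TL_tendsto h) hx

lemma partW (hp : IsIdem p) :
    ∀ (D : ℕ) {N : ℕ} (α : Fin N → ℝ) (f : Fin N → ℤ → ℤ) (c : Fin N → ℤ),
      (∀ i, APdegLE p D (f i)) → (∀ i, HasC p D (f i) (c i)) →
      Filter.Tendsto (fun n => (((∑ i, α i * (f i n : ℝ)) : ℝ) : 𝕋)) (p : Filter ℤ)
        (nhds (((∑ i, α i * (c i : ℝ)) : ℝ) : 𝕋)) := by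
  intro D
  induction D with
  | zero =>
    intro N α f c hf hC
    have hC' : ∀ᶠ m in (p:Filter ℤ), ∀ i, f i m = c i :=
      eventually_all.mpr fun i => hasC_zero_iff.mp (hC i)
    refine Filter.Tendsto.congr' ?_ tendsto_const_nhds
    filter_upwards [hC'] with m hm
    have : (∑ i, α i * (f i m : ℝ)) = ∑ i, α i * (c i : ℝ) :=
      Finset.sum_congr rfl fun i _ => by rw [hm i]
    rw [this]
  | succ D ih =>
    intro N α f c hf hC
    set G : ℤ → ℝ := fun n => ∑ i, α i * (f i n : ℝ) with hG
    set s : ℝ := ∑ i, α i * (c i : ℝ) with hs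
    set γ : ℤ → 𝕋 := fun n => ((G n : ℝ) : 𝕋) with hγ
    set τ : 𝕋 := TL p γ with hτ
    set S : ℤ → ℤ → ℝ := fun a n => ∑ i, α i * ((Dbar a (f i) n : ℤ) : ℝ) with hSdef
    -- pointwise cocycle identity
    have hcoc : ∀ a n, γ (n + a) = γ n + γ a + ((S a n : ℝ) : 𝕋) := by
      intro a n
      have hreal : G (n + a) = G n + G a + S a n := by
        simp only [hG, hSdef, Dbar, ← Finset.sum_add_distrib]
        refine Finset.sum_congr rfl fun i _ => ?_
        push_cast
        ring
      show ((G (n+a) : ℝ) : 𝕋) = _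
      rw [hreal]
      push_cast
      rfl
    -- the inner limit function
    set F : ℤ → 𝕋 := fun a => TL p (fun n => γ (n + a)) with hF
    have hFval : ∀ a, F a = τ + γ a + TL p (fun n => ((S a n : ℝ) : 𝕋)) := by
      intro a
      refine TL_eq ?_
      have h1 : Filter.Tendsto γ (p:Filter ℤ) (nhds τ) := TL_tendsto γ
      have h2 : Filter.Tendsto (fun n => ((S a n : ℝ) : 𝕋)) (p:Filter ℤ)
          (nhds (TL p (fun n => ((S a n : ℝ) : 𝕋)))) := TL_tendsto _
      have := (h1.add (tendsto_const_nhds (x := γ a))).add h2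
      refine this.congr fun n => (hcoc a n).symm
    -- a.e. the inner limit of S is -s
    have hρ : ∀ᶠ a in (p:Filter ℤ), TL p (fun n => ((S a n : ℝ) : 𝕋)) = (((-s : ℝ)) : 𝕋) := by
      have hdegs : ∀ᶠ a in (p:Filter ℤ), ∀ i, APdegLE p D (Dbar a (f i)) :=
        eventually_all.mpr fun i => hf i
      have hCs : ∀ᶠ a in (p:Filter ℤ), ∀ i, HasC p D (Dbar a (f i)) (-(c i)) :=
        eventually_all.mpr fun i => hasC_succ_iff.mp (hC i)
      filter_upwards [hdegs, hCs] with a hdeg hCa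
      have := ih α (fun i => Dbar a (f i)) (fun i => -(c i)) hdeg hCa
      have hval : (∑ i, α i * ((-(c i) : ℤ) : ℝ)) = -s := by
        rw [hs, ← Finset.sum_neg_distrib]
        refine Finset.sum_congr rfl fun i _ => by push_cast; ring
      rw [hval] at this
      exact TL_eq this
    -- idempotence: F tends to τ
    have hFlim : Filter.Tendsto F (p:Filter ℤ) (nhds τ) := by
      rw [(closed_nhds_basis τ).tendsto_right_iff]
      rintro C ⟨hCnhds, hCclosed⟩
      have hmem : ∀ᶠ n in (p:Filter ℤ), γ n ∈ C := (TL_tendsto γ) hCnhds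
      filter_upwards [idem_shift hp hmem] with a ha
      exact hCclosed.mem_of_tendsto (TL_tendsto (fun n => γ (n + a))) ha
    -- the other expression for the limit of F
    have hFlim2 : Filter.Tendsto F (p:Filter ℤ) (nhds (τ + τ + (((-s : ℝ)) : 𝕋))) := by
      have h1 : Filter.Tendsto (fun a => τ + γ a + (((-s : ℝ)) : 𝕋)) (p:Filter ℤ)
          (nhds (τ + τ + (((-s : ℝ)) : 𝕋))) :=
        ((tendsto_const_nhds.add (TL_tendsto γ)).add tendsto_const_nhds)
      refine Filter.Tendsto.congr' ?_ h1
      filter_upwards [hρ] with a ha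
      rw [hFval a, ha]
    have heq : τ = τ + τ + (((-s : ℝ)) : 𝕋) := tendsto_nhds_unique hFlim hFlim2
    have hτs : τ = ((s : ℝ) : 𝕋) := by
      have hneg : (((-s : ℝ)) : 𝕋) = -((s : ℝ) : 𝕋) := by push_cast; rfl
      rw [hneg] at heq
      have : τ + ((s:ℝ):𝕋) = τ + τ := by
        conv_lhs => rw [heq]
        abel
      have := add_left_cancel this
      exact this.symm
    exact hτs ▸ TL_tendsto γ


/-- Decomposition of the rounding of a difference. -/
lemma round_dbar (G : ℤ → ℝ) (a n : ℤ) :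
    round (Dbar a G n) =
      round ((G (n+a) - round (G (n+a))) - (G n - round (G n)) - (G a - round (G a)))
        + Dbar a (fun m => round (G m)) n := by
  have key : Dbar a G n =
      ((G (n+a) - round (G (n+a))) - (G n - round (G n)) - (G a - round (G a)))
        + ((Dbar a (fun m => round (G m)) n : ℤ) : ℝ) := by
    simp only [Dbar]
    push_cast
    ring
  rw [key, round_add_intCast]

lemma partB (hp : IsIdem p) :
    ∀ (D : ℕ) {N : ℕ} (α : Fin N → ℝ) (f : Fin N → ℤ → ℤ) (c : Fin N → ℤ),
      (∀ i, APdegLE p D (f i)) → (∀ i, HasC p D (f i) (c i)) →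
      |∑ i, α i * (c i : ℝ)| < 1/2 →
      HasC p D (fun n : ℤ => round (∑ i, α i * (f i n : ℝ))) 0 := by
  intro D
  induction D with
  | zero =>
    intro N α f c hf hC hs
    rw [hasC_zero_iff]
    have hC' : ∀ᶠ m in (p:Filter ℤ), ∀ i, f i m = c i :=
      eventually_all.mpr fun i => hasC_zero_iff.mp (hC i)
    filter_upwards [hC'] with m hm
    have : (∑ i, α i * (f i m : ℝ)) = ∑ i, α i * (c i : ℝ) :=
      Finset.sum_congr rfl fun i _ => by rw [hm i]
    rw [this, round_eq_zero_iff]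
    have := abs_lt.mp hs
    constructor <;> [linarith; linarith]
  | succ D ih =>
    intro N α f c hf hC hs
    set G : ℤ → ℝ := fun n => ∑ i, α i * (f i n : ℝ) with hG
    set s : ℝ := ∑ i, α i * (c i : ℝ) with hsdef
    set δ : ℝ := (1/2 - |s|)/4 with hδdef
    have hδ : 0 < δ := by rw [hδdef]; linarith
    have h3δ : |s| + 3*δ < 1/2 := by rw [hδdef]; linarith
    -- the fractional parts concentrate near s
    have hS : ∀ᶠ n in (p:Filter ℤ), |(G n - round (G n)) - s| < δ := by
      have hW : Filter.Tendsto (fun n => ((G n : ℝ) : 𝕋)) (p : Filter ℤ)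
          (nhds ((s : ℝ) : 𝕋)) := partW hp (D+1) α f c hf hC
      have hU : ((↑) : ℝ → 𝕋) '' Metric.ball s δ ∈ nhds ((s : ℝ) : 𝕋) :=
        (QuotientAddGroup.isOpenMap_coe (G := ℝ)
          (N := AddSubgroup.zmultiples 1)).image_mem_nhds (Metric.ball_mem_nhds s hδ)
      filter_upwards [hW hU] with n hn
      obtain ⟨y, hy, hyeq⟩ := hn
      rw [Metric.mem_ball, Real.dist_eq] at hy
      -- G n - y is an integer
      have hint : ∃ k : ℤ, G n - y = k := by
        have h0 : ((G n - y : ℝ) : 𝕋) = 0 := by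
          show ((G n : ℝ) : 𝕋) - ((y : ℝ) : 𝕋) = 0
          rw [show ((y : ℝ) : 𝕋) = ((G n : ℝ) : 𝕋) from hyeq, sub_self]
        rw [AddCircle.coe_eq_zero_iff] at h0
        obtain ⟨k, hk⟩ := h0
        exact ⟨k, by simpa using hk.symm⟩
      obtain ⟨k, hk⟩ := hint
      have habs := le_abs_self s
      have habs' := neg_abs_le s
      have hyz : round y = 0 := by
        rw [round_eq_zero_iff]
        have h' := abs_lt.mp hy
        constructor
        · linarith
        · linarith
      have hGy : G n = y + (k : ℝ) := by linarith
      have hround : round (G n) = k := by rw [hGy, round_add_intCast, hyz, zero_add]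
      have hfr : G n - (round (G n) : ℝ) = y := by rw [hround]; linarith
      rw [hfr]
      exact hy
    -- a.e. a, the epsilon correction vanishes a.e.
    have hEps : ∀ᶠ a in (p:Filter ℤ), ∀ᶠ n in (p:Filter ℤ),
        round ((G (n+a) - round (G (n+a))) - (G n - round (G n)) - (G a - round (G a))) = 0 := by
      filter_upwards [idem_shift hp hS, hS] with a hna ha
      filter_upwards [hna, hS] with n h1 h2
      rw [round_eq_zero_iff]
      have e1 := abs_lt.mp h1
      have e2 := abs_lt.mp h2
      have e3 := abs_lt.mp ha
      have habs := le_abs_self s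
      have habs' := neg_abs_le s
      constructor
      · linarith
      · linarith
    -- conclude
    rw [hasC_succ_iff, ]
    have hdegs : ∀ᶠ a in (p:Filter ℤ), ∀ i, APdegLE p D (Dbar a (f i)) :=
      eventually_all.mpr fun i => hf i
    have hCs : ∀ᶠ a in (p:Filter ℤ), ∀ i, HasC p D (Dbar a (f i)) (-(c i)) :=
      eventually_all.mpr fun i => hasC_succ_iff.mp (hC i)
    filter_upwards [hEps, hdegs, hCs] with a hEa hdeg hCa
    rw [neg_zero]
    have hsneg : |∑ i, α i * ((-(c i) : ℤ) : ℝ)| < 1/2 := by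
      have : (∑ i, α i * ((-(c i) : ℤ) : ℝ)) = -s := by
        rw [hsdef, ← Finset.sum_neg_distrib]
        refine Finset.sum_congr rfl fun i _ => by push_cast; ring
      rw [this, abs_neg]
      exact hs
    have hIH : HasC p D (fun n : ℤ => round (∑ i, α i * ((Dbar a (f i) n : ℤ) : ℝ))) 0 :=
      ih α (fun i => Dbar a (f i)) (fun i => -(c i)) hdeg hCa hsneg
    refine hasC_congr hp ?_ hIH
    filter_upwards [hEa] with n hn
    have hSn : (∑ i, α i * ((Dbar a (f i) n : ℤ) : ℝ)) = Dbar a G n := by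
      rw [hG, dbar_sum_eq]
    rw [hSn, round_dbar G a n, hn, zero_add]

end Circle
end Aux
end AP

/-- for `g n = ∑ αᵢ fᵢ(n)` with `fᵢ` `p`-almost polynomials, the closest-integer
function `⌊g⌉ = round ∘ g` is a `p`-almost polynomial of degree at most `maxᵢ deg fᵢ`, and it is
admissible provided `|∑ αᵢ C(fᵢ)| < 1/2`. -/
theorem stmt_13 (p : Ultrafilter ℤ) (hp : AP.IsIdem p) (N : ℕ)
    (α : Fin N → ℝ) (f : Fin N → ℤ → ℤ) (d : Fin N → ℕ) (c : Fin N → ℤ)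
    (hf : ∀ i, AP.APdegLE p (d i) (f i)) (hc : ∀ i, AP.HasC p (d i) (f i) (c i)) :
    AP.APdegLE p (Finset.univ.sup d) (fun n : ℤ => round (∑ i, α i * (f i n : ℝ))) ∧
    (|∑ i, α i * (c i : ℝ)| < 1 / 2 →
      AP.HasC p (Finset.univ.sup d) (fun n : ℤ => round (∑ i, α i * (f i n : ℝ))) 0) := by
  classical
  set D := Finset.univ.sup d with hD
  have hf' : ∀ i, AP.APdegLE p D (f i) := fun i =>
    AP.apdegLE_mono hp (Finset.le_sup (Finset.mem_univ i)) (hf i)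
  have hc' : ∀ i, AP.HasC p D (f i) (c i) := fun i =>
    AP.hasC_of_le hp (Finset.le_sup (Finset.mem_univ i)) (hf i) (hc i)
  exact ⟨AP.partA hp D α f hf', fun h => AP.partB hp D α f c hf' hc' h⟩
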